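/- arXiv:1001.0368 — 3 statements merged into one kernel-verified Lean document; each statement's English description precedes it below -/
import Mathlib

section
/- Let g : [0,∞) → ℝ be nonnegative and C¹ with g'(t) ≤ -γ(t) g(t) + α(t) g(t)^p + β(t), p > 1, where α > 0, β, γ continuous, and let μ ∈ C¹, μ > 0, satisfy α(t) μ(t)^{-p} + β(t) ≤ μ(t)^{-1}(γ(t) - μ'(t) μ(t)^{-1}) for all t and μ(0) g(0) < 1. Then μ(t) g(t) < 1 for all t ≥ 0. -/
/-!
Put `h = μ g`. As long as `h < 1` we have `g ≤ μ⁻¹`, hence `α g^p ≤ α μ^{-p}`, and the condition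
on `μ` absorbs the nonlinear term: `h' ≤ (γ - μ'/μ)(1 - h)`. If `h` first reached `1` at time `T`,
then with `M` an upper bound of `γ - μ'/μ` on `[0, T]` the function `(1 - h) e^{M t}` would be
nondecreasing on `[0, T]`, positive at `0` and nonpositive at `T`.
-/

open Set Real

theorem monotoneOn_sub_mul_exp_of_deriv_le {h h' : ℝ → ℝ} {a b c M : ℝ}
    (hcont : ContinuousOn h (Icc a b)) (hd : ∀ t ∈ Ioo a b, HasDerivAt h (h' t) t)
    (hle : ∀ t ∈ Ioo a b, h' t ≤ M * (c - h t)) :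
    MonotoneOn (fun t => (c - h t) * exp (M * t)) (Icc a b) := by
  have hexp (t : ℝ) : HasDerivAt (fun s => exp (M * s)) (exp (M * t) * M) t := by
    simpa using ((hasDerivAt_id t).const_mul M).exp
  refine monotoneOn_of_hasDerivWithinAt_nonneg (convex_Icc a b)
    ((continuousOn_const.sub hcont).mul (by fun_prop))
    (f' := fun t => -h' t * exp (M * t) + (c - h t) * (exp (M * t) * M)) ?_ ?_
  · intro t ht
    rw [interior_Icc] at ht
    exact (((hd t ht).const_sub c).mul (hexp t)).hasDerivWithinAt
  · intro t ht
    rw [interior_Icc] at ht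
    have := hle t ht
    have := exp_pos (M * t)
    nlinarith

theorem exists_first_le_of_continuousOn {h : ℝ → ℝ} {a b c : ℝ}
    (hcont : ContinuousOn h (Icc a b)) (ha : h a < c) (hab : a ≤ b) (hb : c ≤ h b) :
    ∃ T ∈ Ioc a b, c ≤ h T ∧ ∀ t ∈ Ico a T, h t < c := by
  have hclosed : IsClosed (Icc a b ∩ h ⁻¹' Ici c) :=
    hcont.preimage_isClosed_of_isClosed isClosed_Icc isClosed_Ici
  obtain ⟨T, ⟨⟨haT, hTb⟩, hT⟩, hleast⟩ :=
    (isCompact_Icc.of_isClosed_subset hclosed inter_subset_left).exists_isLeast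
      ⟨b, ⟨hab, le_rfl⟩, hb⟩
  refine ⟨T, ⟨lt_of_le_of_ne haT ?_, hTb⟩, hT, fun t ⟨hat, htT⟩ => ?_⟩
  · rintro rfl
    exact (not_le.2 ha) hT
  · by_contra hge
    exact (not_le.2 htT) (hleast ⟨⟨hat, htT.le.trans hTb⟩, not_lt.1 hge⟩)

theorem forall_lt_of_hasDerivAt_le_mul_sub {h h' L : ℝ → ℝ} {c : ℝ}
    (hd : ∀ t, 0 ≤ t → HasDerivAt h (h' t) t) (hL : ContinuousOn L (Ici 0))
    (hbound : ∀ t, 0 ≤ t → h t < c → h' t ≤ L t * (c - h t)) (h0 : h 0 < c) :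
    ∀ t, 0 ≤ t → h t < c := by
  by_contra! ⟨t₀, ht₀, hc⟩
  have hcont : ContinuousOn h (Ici 0) := fun t ht => (hd t ht).continuousAt.continuousWithinAt
  obtain ⟨T, ⟨hT0, -⟩, hTc, hbefore⟩ :=
    exists_first_le_of_continuousOn (hcont.mono Icc_subset_Ici_self) h0 ht₀ hc
  obtain ⟨M, hM⟩ :=
    (isCompact_Icc (a := 0) (b := T)).bddAbove_image (hL.mono Icc_subset_Ici_self)
  have hmono := monotoneOn_sub_mul_exp_of_deriv_le (c := c) (M := M)
    (hcont.mono Icc_subset_Ici_self) (fun t ht => hd t ht.1.le) fun t ht => by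
      have hlt := hbefore t ⟨ht.1.le, ht.2⟩
      calc h' t ≤ L t * (c - h t) := hbound t ht.1.le hlt
        _ ≤ M * (c - h t) :=
          mul_le_mul_of_nonneg_right (hM ⟨t, Ioo_subset_Icc_self ht, rfl⟩) (by linarith)
  have hv : (c - h 0) * exp (M * 0) ≤ (c - h T) * exp (M * T) :=
    hmono ⟨le_rfl, hT0.le⟩ ⟨hT0.le, le_rfl⟩ hT0.le
  rw [mul_zero, exp_zero, mul_one] at hv
  nlinarith [exp_pos (M * T)]

theorem deriv_product_le_of_mul_lt_one {g g' α β γ μ μ' p : ℝ} (hp : 0 ≤ p) (hg : 0 ≤ g)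
    (hμ : 0 < μ) (hα : 0 ≤ α) (hlt : μ * g < 1) (hineq : g' ≤ -γ * g + α * g ^ p + β)
    (hμineq : α * μ ^ (-p) + β ≤ μ⁻¹ * (γ - μ' * μ⁻¹)) :
    μ' * g + μ * g' ≤ (γ - μ' * μ⁻¹) * (1 - μ * g) := by
  have hg_le : g ≤ μ⁻¹ := by
    rw [← one_div, le_div_iff₀' hμ]
    exact hlt.le
  have hpow : g ^ p ≤ μ ^ (-p) := by
    rw [rpow_neg hμ.le, ← inv_rpow hμ.le]
    exact rpow_le_rpow hg hg_le hp
  have hg' : g' ≤ -γ * g + μ⁻¹ * (γ - μ' * μ⁻¹) := by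
    linarith [mul_le_mul_of_nonneg_left hpow hα]
  calc μ' * g + μ * g' ≤ μ' * g + μ * (-γ * g + μ⁻¹ * (γ - μ' * μ⁻¹)) := by gcongr
    _ = (γ - μ' * μ⁻¹) * (1 - μ * g) := by field_simp; ring

theorem stmt_4_general (g g' α β γ μ μ' : ℝ → ℝ) (p : ℝ) (hp : 1 < p)
    (hg0 : ∀ t, 0 ≤ t → 0 ≤ g t)
    (hgderiv : ∀ t, 0 ≤ t → HasDerivAt g (g' t) t)
    (hineq : ∀ t, 0 ≤ t → g' t ≤ -γ t * g t + α t * g t ^ p + β t)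
    (hα : ∀ t, 0 ≤ t → 0 < α t)
    (hγc : ContinuousOn γ (Set.Ici 0))
    (hμpos : ∀ t, 0 ≤ t → 0 < μ t)
    (hμderiv : ∀ t, 0 ≤ t → HasDerivAt μ (μ' t) t)
    (hμ'cont : ContinuousOn μ' (Set.Ici 0))
    (hμineq : ∀ t, 0 ≤ t →
      α t * (μ t) ^ (-p) + β t ≤ (μ t)⁻¹ * (γ t - μ' t * (μ t)⁻¹))
    (hinit : μ 0 * g 0 < 1) :
    ∀ t, 0 ≤ t → μ t * g t < 1 := by
  have hμc : ContinuousOn μ (Ici 0) := fun t ht => (hμderiv t ht).continuousAt.continuousWithinAt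
  refine forall_lt_of_hasDerivAt_le_mul_sub (fun t ht => (hμderiv t ht).mul (hgderiv t ht))
    (hγc.sub (hμ'cont.mul (hμc.inv₀ fun t ht => (hμpos t ht).ne'))) (fun t ht hlt => ?_) hinit
  exact deriv_product_le_of_mul_lt_one (by linarith) (hg0 t ht) (hμpos t ht) (hα t ht).le hlt
    (hineq t ht) (hμineq t ht)

theorem stmt_4 (g g' α β γ μ μ' : ℝ → ℝ) (p : ℝ) (hp : 1 < p)
    (hg0 : ∀ t, 0 ≤ t → 0 ≤ g t)
    (hgderiv : ∀ t, 0 ≤ t → HasDerivAt g (g' t) t)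
    (hg'cont : ContinuousOn g' (Set.Ici 0))
    (hineq : ∀ t, 0 ≤ t → g' t ≤ -γ t * g t + α t * g t ^ p + β t)
    (hα : ∀ t, 0 ≤ t → 0 < α t)
    (hαc : ContinuousOn α (Set.Ici 0))
    (hβc : ContinuousOn β (Set.Ici 0))
    (hγc : ContinuousOn γ (Set.Ici 0))
    (hμpos : ∀ t, 0 ≤ t → 0 < μ t)
    (hμderiv : ∀ t, 0 ≤ t → HasDerivAt μ (μ' t) t)
    (hμ'cont : ContinuousOn μ' (Set.Ici 0))
    (hμineq : ∀ t, 0 ≤ t →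
      α t * (μ t) ^ (-p) + β t ≤ (μ t)⁻¹ * (γ t - μ' t * (μ t)⁻¹))
    (hinit : μ 0 * g 0 < 1) :
    ∀ t, 0 ≤ t → μ t * g t < 1 :=
  stmt_4_general g g' α β γ μ μ' p hp hg0 hgderiv hineq hα hγc hμpos hμderiv hμ'cont hμineq hinit
end

section
/- Let g : [0,∞) → [0,∞) be C¹ and satisfy g'(t) ≤ −g(t) + c₃ r(t)^{-b} g(t)^p + c₂ |r'(t)| r(t)^{-b}, where p > 1, b > 0, c₂, c₃ > 0, and r : [0,∞) → (0,∞) is C¹, strictly decreasing to 0. Set k = (b+1)/(p−1), λ = r(0)^k/(2 g(0)) (assuming g(0) > 0). If for all t ≥ 0: c₃ r(t) λ^{-(p-1)} + c₂ λ |r'(t)| r(t)^{-(k+b)} + k |r'(t)| r(t)^{-1} ≤ 1, then g(t) ≤ λ^{-1} r(t)^k for all t ≥ 0; in particular g(t) → 0 as t → ∞. -/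
/-!
Comparison with the barrier `μ t = λ⁻¹ r(t)^k`. The exponent `k` is chosen so that
`k (p - 1) = b + 1`; multiplying the hypothesis on `r` by `μ`, its three terms become exactly
`c₃ r^(-b) μ^p`, `c₂ |r'| r^(-b)` and `-μ'`, so `μ` is a supersolution of the differential
inequality satisfied by `g`, and `g 0 = μ 0 / 2`. Since `y ↦ -y + α y^p + β` is one-sided
Lipschitz on bounded sets, a first-touching argument (against `μ` pushed up by `ε e^{Lt}`, then
`ε → 0`) gives `g ≤ μ` on every `[0, T]`. Finally `μ → 0` because `r → 0` and `k > 0`.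
-/

open Filter Set Real Topology

theorem image_le_of_deriv_right_le_of_supersolution {f f' B B' : ℝ → ℝ} {F : ℝ → ℝ → ℝ}
    {a b C : ℝ}
    (hf : ContinuousOn f (Icc a b)) (hf' : ∀ x ∈ Ico a b, HasDerivWithinAt f (f' x) (Ici x) x)
    (hB : ContinuousOn B (Icc a b)) (hB' : ∀ x ∈ Ico a b, HasDerivWithinAt B (B' x) (Ici x) x)
    (ha : f a ≤ B a) (hfF : ∀ x ∈ Ico a b, f' x ≤ F x (f x))
    (hBF : ∀ x ∈ Ico a b, F x (B x) ≤ B' x)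
    (hF : ∀ x ∈ Ico a b, ∀ δ ∈ Ioc (0 : ℝ) 1, F x (B x + δ) ≤ F x (B x) + C * δ) :
    ∀ ⦃x⦄, x ∈ Icc a b → f x ≤ B x := by
  -- the perturbation `ε e^{L (x - a)}` outgrows the Lipschitz defect `C δ`, so touching is strict
  set L := |C| + 1
  have perturbed : ∀ ε ∈ Ioc 0 (exp (-(L * (b - a)))), ∀ x ∈ Icc a b,
      f x ≤ B x + ε * exp (L * (x - a)) := by
    rintro ε ⟨hε0, hεle⟩
    have hexp (x : ℝ) :
        HasDerivAt (fun y => ε * exp (L * (y - a))) (ε * exp (L * (x - a)) * L) x := by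
      simpa [mul_assoc] using (((hasDerivAt_id x).sub_const a).const_mul L).exp.const_mul ε
    refine image_le_of_deriv_right_lt_deriv_boundary' hf hf'
      (by simpa using ha.trans (le_add_of_nonneg_right hε0.le)) (hB.add (by fun_prop))
      (fun x hx => (hB' x hx).add (hexp x).hasDerivWithinAt) fun x hx hfx => ?_
    have hδ : ε * exp (L * (x - a)) ∈ Ioc 0 1 := by
      refine ⟨by positivity, ?_⟩
      calc ε * exp (L * (x - a)) ≤ exp (-(L * (b - a))) * exp (L * (b - a)) := by
            gcongr
            exact hx.2.le
        _ = 1 := by rw [← exp_add, neg_add_cancel, exp_zero]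
    set δ := ε * exp (L * (x - a))
    calc f' x ≤ F x (B x + δ) := hfx ▸ hfF x hx
      _ ≤ B' x + C * δ := by linarith [hF x hx δ hδ, hBF x hx]
      _ < B' x + δ * L := by nlinarith [le_abs_self C, hδ.1]
  intro x hx
  have hlim : Tendsto (fun ε => B x + ε * exp (L * (x - a))) (𝓝[>] 0) (𝓝 (B x)) := by
    have h := (continuous_const.add (continuous_id.mul continuous_const)).tendsto' 0 (B x)
      (by simp) (f := fun ε => B x + ε * exp (L * (x - a)))
    exact h.mono_left nhdsWithin_le_nhds
  refine ge_of_tendsto hlim ?_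
  filter_upwards [Ioc_mem_nhdsGT (exp_pos _)] with ε hε using perturbed ε hε x hx

theorem rpow_sub_rpow_le_mul {p x y : ℝ} (hp : 1 ≤ p) (hx : 0 ≤ x) (hxy : x ≤ y) :
    y ^ p - x ^ p ≤ p * y ^ (p - 1) * (y - x) := by
  rcases (hx.trans hxy).eq_or_lt with rfl | hy
  · obtain rfl : x = 0 := le_antisymm hxy hx
    simp
  have hbern := one_add_mul_self_le_rpow_one_add (s := x / y - 1) (by
    have : 0 ≤ x / y := by positivity
    linarith) hp
  rw [add_sub_cancel, div_rpow hx hy.le, le_div_iff₀ (by positivity)] at hbern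
  have : y ^ p = y ^ (p - 1) * y := by rw [← rpow_add_one hy.ne', sub_add_cancel]
  rw [this] at hbern ⊢
  field_simp at hbern
  nlinarith

theorem HasDerivAt.nonpos_of_antitoneOn_Ici {f : ℝ → ℝ} {f' a x : ℝ}
    (hd : HasDerivAt f f' x) (hf : AntitoneOn f (Ici a)) (hx : a ≤ x) : f' ≤ 0 :=
  hd.hasDerivWithinAt.nonpos_of_antitoneOn
    (by rw [accPt_principal_iff_nhdsWithin, Ici_sdiff_left]; infer_instance)
    (hf.mono (Ici_subset_Ici.2 hx))

theorem neg_add_mul_rpow_add_le {p a A y δ M c : ℝ} (hp : 1 ≤ p) (ha : 0 ≤ a) (haA : a ≤ A)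
    (hy : 0 ≤ y) (hδ : 0 ≤ δ) (hM : y + δ ≤ M) :
    -(y + δ) + a * (y + δ) ^ p + c ≤ -y + a * y ^ p + c + A * (p * M ^ (p - 1)) * δ := by
  have hpow := rpow_sub_rpow_le_mul hp hy (le_add_of_nonneg_right hδ)
  rw [add_sub_cancel_left] at hpow
  have hM' : (y + δ) ^ (p - 1) ≤ M ^ (p - 1) := rpow_le_rpow (by positivity) hM (by linarith)
  have : a * ((y + δ) ^ p - y ^ p) ≤ A * (p * M ^ (p - 1)) * δ :=
    calc _ ≤ a * (p * (y + δ) ^ (p - 1) * δ) := mul_le_mul_of_nonneg_left hpow ha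
      _ ≤ _ := by
        rw [← mul_assoc]
        gcongr
        linarith
  linarith

theorem barrier_ineq_of_sum_le_one {p b c₂ c₃ k lam R R' : ℝ} (hR : 0 < R) (hR' : R' ≤ 0)
    (hlam : 0 < lam) (hk : k * (p - 1) = b + 1)
    (hcond : c₃ * R * lam ^ (-(p - 1)) + c₂ * lam * |R'| * R ^ (-(k + b))
        + k * |R'| * R⁻¹ ≤ 1) :
    -(lam⁻¹ * R ^ k) + c₃ * R ^ (-b) * (lam⁻¹ * R ^ k) ^ p + c₂ * |R'| * R ^ (-b)
      ≤ lam⁻¹ * (R' * k * R ^ (k - 1)) := by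
  have e1 : lam⁻¹ * R ^ k * (c₃ * R * lam ^ (-(p - 1)))
      = c₃ * R ^ (-b) * (lam⁻¹ * R ^ k) ^ p := by
    have hkp : k * p = k + 1 + b := by linarith
    rw [mul_rpow (by positivity) (by positivity), inv_rpow hlam.le, ← rpow_mul hR.le, hkp,
      rpow_add hR, rpow_add hR, rpow_one, rpow_neg hlam.le, rpow_sub_one hlam.ne',
      rpow_neg hR.le]
    field_simp
  have e2 : lam⁻¹ * R ^ k * (c₂ * lam * |R'| * R ^ (-(k + b))) = c₂ * |R'| * R ^ (-b) := by
    rw [rpow_neg hR.le, rpow_neg hR.le, rpow_add hR]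
    field_simp
  have e3 : lam⁻¹ * R ^ k * (k * |R'| * R⁻¹) = -(lam⁻¹ * (R' * k * R ^ (k - 1))) := by
    rw [abs_of_nonpos hR', rpow_sub_one hR.ne']
    field_simp
  have := mul_le_mul_of_nonneg_left hcond (by positivity : 0 ≤ lam⁻¹ * R ^ k)
  rw [mul_add, mul_add, e1, e2, e3] at this
  linarith

theorem le_supersolution_of_bernoulli_ineq {g g' μ μ' α β : ℝ → ℝ} {p : ℝ} (hp : 1 ≤ p)
    (hg : ∀ t, 0 ≤ t → HasDerivAt g (g' t) t) (hμ : ∀ t, 0 ≤ t → HasDerivAt μ (μ' t) t)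
    (hμ_nonneg : ∀ t, 0 ≤ t → 0 ≤ μ t) (hα : ∀ t, 0 ≤ t → 0 ≤ α t)
    (hα_cont : ContinuousOn α (Ici 0))
    (hg_le : ∀ t, 0 ≤ t → g' t ≤ -g t + α t * g t ^ p + β t)
    (hμ_ge : ∀ t, 0 ≤ t → -μ t + α t * μ t ^ p + β t ≤ μ' t) (h0 : g 0 ≤ μ 0) :
    ∀ t, 0 ≤ t → g t ≤ μ t := by
  intro T hT
  obtain ⟨A, hA⟩ := isCompact_Icc.exists_bound_of_continuousOn
    (hα_cont.mono (Icc_subset_Ici_self : Icc 0 T ⊆ Ici 0))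
  obtain ⟨M, hM⟩ := isCompact_Icc.exists_bound_of_continuousOn (s := Icc 0 T)
    fun t ht => (hμ t ht.1).continuousAt.continuousWithinAt
  refine image_le_of_deriv_right_le_of_supersolution (F := fun t y => -y + α t * y ^ p + β t)
    (C := A * (p * (M + 1) ^ (p - 1)))
    (fun t ht => (hg t ht.1).continuousAt.continuousWithinAt)
    (fun t ht => (hg t ht.1).hasDerivWithinAt)
    (fun t ht => (hμ t ht.1).continuousAt.continuousWithinAt)
    (fun t ht => (hμ t ht.1).hasDerivWithinAt) h0 (fun t ht => hg_le t ht.1)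
    (fun t ht => hμ_ge t ht.1) (fun t ht δ hδ => ?_) ⟨hT, le_rfl⟩
  have ht : t ∈ Icc 0 T := Ico_subset_Icc_self ht
  exact neg_add_mul_rpow_add_le (M := M + 1) hp (hα t ht.1) (le_of_abs_le (hA t ht))
    (hμ_nonneg t ht.1) hδ.1.le (add_le_add (le_of_abs_le (hM t ht)) hδ.2)

theorem stmt_14_general (g g' r r' : ℝ → ℝ) (p b c₂ c₃ k lam : ℝ)
    (hp : 1 < p) (hb : 0 < b) (hc₃ : 0 < c₃)
    (hg0 : ∀ t, 0 ≤ t → 0 ≤ g t) (hg0pos : 0 < g 0)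
    (hgC1 : ∀ t, 0 ≤ t → HasDerivAt g (g' t) t)
    (hrpos : ∀ t, 0 ≤ t → 0 < r t)
    (hrC1 : ∀ t, 0 ≤ t → HasDerivAt r (r' t) t)
    (hranti : StrictAntiOn r (Set.Ici 0))
    (hrlim : Tendsto r atTop (nhds 0))
    (hineq : ∀ t, 0 ≤ t →
      g' t ≤ -g t + c₃ * r t ^ (-b) * g t ^ p + c₂ * |r' t| * r t ^ (-b))
    (hk : k = (b + 1) / (p - 1))
    (hlam : lam = r 0 ^ k / (2 * g 0))
    (hcond : ∀ t, 0 ≤ t →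
      c₃ * r t * lam ^ (-(p - 1)) + c₂ * lam * |r' t| * r t ^ (-(k + b))
        + k * |r' t| * (r t)⁻¹ ≤ 1) :
    (∀ t, 0 ≤ t → g t ≤ lam⁻¹ * r t ^ k) ∧ Tendsto g atTop (nhds 0) := by
  have hk0 : 0 < k := by rw [hk]; exact div_pos (by linarith) (by linarith)
  have hkp : k * (p - 1) = b + 1 := by rw [hk, div_mul_cancel₀ _ (by linarith)]
  have hr0k : 0 < r 0 ^ k := rpow_pos_of_pos (hrpos 0 le_rfl) k
  have hlam0 : 0 < lam := by rw [hlam]; positivity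
  have hr_cont : ContinuousOn r (Ici 0) := fun t ht => (hrC1 t ht).continuousAt.continuousWithinAt
  have hbound : ∀ t, 0 ≤ t → g t ≤ lam⁻¹ * r t ^ k :=
    le_supersolution_of_bernoulli_ineq (α := fun t => c₃ * r t ^ (-b))
      (β := fun t => c₂ * |r' t| * r t ^ (-b)) hp.le hgC1
      (fun t ht => ((hrC1 t ht).rpow_const (Or.inl (hrpos t ht).ne')).const_mul lam⁻¹)
      (fun t ht => (mul_pos (inv_pos.2 hlam0) (rpow_pos_of_pos (hrpos t ht) k)).le)
      (fun t ht => (mul_pos hc₃ (rpow_pos_of_pos (hrpos t ht) _)).le)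
      (continuousOn_const.mul (hr_cont.rpow_const fun t ht => Or.inl (hrpos t ht).ne'))
      hineq
      (fun t ht => barrier_ineq_of_sum_le_one (hrpos t ht)
        ((hrC1 t ht).nonpos_of_antitoneOn_Ici hranti.antitoneOn ht) hlam0 hkp (hcond t ht))
      (by rw [hlam, inv_div, div_mul_cancel₀ _ hr0k.ne']; linarith)
  refine ⟨hbound,
    squeeze_zero' (eventually_atTop.2 ⟨0, hg0⟩) (eventually_atTop.2 ⟨0, hbound⟩) ?_⟩
  simpa [zero_rpow hk0.ne'] using
    ((continuousAt_rpow_const 0 k (Or.inr hk0.le)).tendsto.comp hrlim).const_mul lam⁻¹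

theorem stmt_14 (g g' r r' : ℝ → ℝ) (p b c₂ c₃ k lam : ℝ)
    (hp : 1 < p) (hb : 0 < b) (hc₂ : 0 < c₂) (hc₃ : 0 < c₃)
    (hg0 : ∀ t, 0 ≤ t → 0 ≤ g t) (hg0pos : 0 < g 0)
    (hgC1 : ∀ t, 0 ≤ t → HasDerivAt g (g' t) t)
    (hg'cont : ContinuousOn g' (Set.Ici 0))
    (hrpos : ∀ t, 0 ≤ t → 0 < r t)
    (hrC1 : ∀ t, 0 ≤ t → HasDerivAt r (r' t) t)
    (hr'cont : ContinuousOn r' (Set.Ici 0))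
    (hranti : StrictAntiOn r (Set.Ici 0))
    (hrlim : Tendsto r atTop (nhds 0))
    (hineq : ∀ t, 0 ≤ t →
      g' t ≤ -g t + c₃ * r t ^ (-b) * g t ^ p + c₂ * |r' t| * r t ^ (-b))
    (hk : k = (b + 1) / (p - 1))
    (hlam : lam = r 0 ^ k / (2 * g 0))
    (hcond : ∀ t, 0 ≤ t →
      c₃ * r t * lam ^ (-(p - 1)) + c₂ * lam * |r' t| * r t ^ (-(k + b))
        + k * |r' t| * (r t)⁻¹ ≤ 1) :
    (∀ t, 0 ≤ t → g t ≤ lam⁻¹ * r t ^ k) ∧ Tendsto g atTop (nhds 0) :=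
  stmt_14_general g g' r r' p b c₂ c₃ k lam hp hb hc₃ hg0 hg0pos hgC1 hrpos hrC1 hranti hrlim hineq
    hk hlam hcond
end

section
/- Let A be a closed, densely defined linear operator on a Hilbert space H, T := A*A, and suppose f = A y₀ for some y₀ ∈ H. Then for each a > 0 the element u_a := (T + aI)^{-1} A* f is well-defined, and y := lim_{a→0⁺} u_a exists, satisfies A y = f, and y is orthogonal to the null-space N(A); i.e., y is the minimal-norm solution of A u = f. -/
/-!
Write `R a = (T + a)⁻¹`. Positivity of `T = A†A` gives `a ‖x‖ ≤ ‖(T + a) x‖`, so `T + a` is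
invertible and `‖a • R a‖ ≤ 1` for `a > 0`. Take `y = y₀ - P y₀` with `P` the projection onto
`ker A`; then `A y = f`, `A† f = T y` and `R a (T y) = y - a • R a y`. Since
`a • R a (T z) = a • z - a • (a • R a z)` has norm at most `2 a ‖z‖`, the uniformly bounded family
`a • R a` tends to `0` on `range T`, hence on its closure `(ker T)ᗮ = (ker A)ᗮ`, which contains `y`.
-/

open Filter Topology ContinuousLinearMap

theorem tendsto_zero_of_mem_closure_of_eventually_norm_le {𝕜 E F ι : Type*}
    [NontriviallyNormedField 𝕜] [SeminormedAddCommGroup E] [NormedSpace 𝕜 E]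
    [SeminormedAddCommGroup F] [NormedSpace 𝕜 F] {l : Filter ι} {G : ι → E →L[𝕜] F} {C : ℝ}
    (hG : ∀ᶠ i in l, ‖G i‖ ≤ C) {s : Set E} (hs : ∀ x ∈ s, Tendsto (G · x) l (𝓝 0))
    {x : E} (hx : x ∈ closure s) : Tendsto (G · x) l (𝓝 0) := by
  set I := {i | ‖G i‖ ≤ C}
  have hI : Set.range ((↑) : I → ι) ∈ l := by rwa [Subtype.range_coe]
  have hequi : Equicontinuous ((↑) ∘ fun i : I ↦ G i) :=
    ((NormedSpace.equicontinuous_TFAE fun i : I ↦ G i).out 5 1).mp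
      (⟨C, fun i ↦ i.property⟩ : ∃ C, ∀ i : I, ‖G i‖ ≤ C)
  have hclosed : IsClosed {x | Tendsto (fun i : I ↦ G i x) (comap (↑) l) (𝓝 0)} :=
    hequi.isClosed_setOfPred_tendsto (f := fun _ ↦ 0) continuous_const
  exact (tendsto_comap'_iff hI).1 <|
    closure_minimal (fun x hx ↦ (tendsto_comap'_iff hI).2 (hs x hx)) hclosed hx

namespace ContinuousLinearMap.IsPositive

variable {𝕜 E : Type*} [RCLike 𝕜] [NormedAddCommGroup E] [InnerProductSpace 𝕜 E]
  {T : E →L[𝕜] E} {a : ℝ}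

theorem sq_norm_mul_le_re_inner_add_smul_one_apply (hT : T.IsPositive) (x : E) :
    ‖x‖ ^ 2 * a ≤ RCLike.re (inner 𝕜 ((T + (a : 𝕜) • 1) x) x) := by
  have hTx := hT.re_inner_nonneg_left x
  have hx := inner_self_eq_norm_sq (𝕜 := 𝕜) x
  simp only [add_apply, smul_apply, one_apply_eq_self, inner_add_left, inner_smul_left, map_add,
    RCLike.conj_ofReal, RCLike.re_ofReal_mul, hx]
  linarith

theorem mul_norm_le_norm_add_smul_one_apply (hT : T.IsPositive) (x : E) :
    a * ‖x‖ ≤ ‖(T + (a : 𝕜) • 1) x‖ := by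
  rcases (norm_nonneg x).eq_or_lt with hx | hx
  · rw [← hx, mul_zero]; exact norm_nonneg _
  refine le_of_mul_le_mul_right ?_ hx
  calc a * ‖x‖ * ‖x‖ = ‖x‖ ^ 2 * a := by ring
    _ ≤ _ := hT.sq_norm_mul_le_re_inner_add_smul_one_apply x
    _ ≤ _ := re_inner_le_norm _ _

theorem isUnit_add_smul_one [CompleteSpace E] (hT : T.IsPositive) (ha : 0 < a) :
    IsUnit (T + (a : 𝕜) • 1) :=
  isUnit_of_forall_le_norm_inner_map _ (c := ⟨a, ha.le⟩) ha fun x ↦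
    (hT.sq_norm_mul_le_re_inner_add_smul_one_apply x).trans (RCLike.re_le_norm _)

theorem add_smul_one_apply_inverse_apply [CompleteSpace E] (hT : T.IsPositive) (ha : 0 < a)
    (x : E) : (T + (a : 𝕜) • 1) (Ring.inverse (T + (a : 𝕜) • 1) x) = x :=
  congr($(Ring.mul_inverse_cancel _ (hT.isUnit_add_smul_one ha)) x)

theorem inverse_add_smul_one_apply_add_smul_one_apply [CompleteSpace E] (hT : T.IsPositive)
    (ha : 0 < a) (x : E) : Ring.inverse (T + (a : 𝕜) • 1) ((T + (a : 𝕜) • 1) x) = x :=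
  congr($(Ring.inverse_mul_cancel _ (hT.isUnit_add_smul_one ha)) x)

theorem norm_smul_inverse_add_smul_one_le [CompleteSpace E] (hT : T.IsPositive) (ha : 0 < a) :
    ‖(a : 𝕜) • Ring.inverse (T + (a : 𝕜) • 1)‖ ≤ 1 := by
  refine opNorm_le_bound _ zero_le_one fun x ↦ ?_
  rw [smul_apply, norm_smul, RCLike.norm_ofReal, abs_of_pos ha, one_mul]
  simpa only [hT.add_smul_one_apply_inverse_apply ha] using
    hT.mul_norm_le_norm_add_smul_one_apply (a := a) (Ring.inverse (T + (a : 𝕜) • 1) x)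

theorem inverse_add_smul_one_apply_apply [CompleteSpace E] (hT : T.IsPositive) (ha : 0 < a)
    (x : E) :
    Ring.inverse (T + (a : 𝕜) • 1) (T x) = x - (a : 𝕜) • Ring.inverse (T + (a : 𝕜) • 1) x := by
  have hTx : T x = (T + (a : 𝕜) • 1) x - (a : 𝕜) • x := by simp
  rw [hTx, map_sub, map_smul, hT.inverse_add_smul_one_apply_add_smul_one_apply ha]

theorem tendsto_smul_inverse_add_smul_one_apply_apply [CompleteSpace E] (hT : T.IsPositive)
    (z : E) :
    Tendsto (fun a : ℝ ↦ (a : 𝕜) • Ring.inverse (T + (a : 𝕜) • 1) (T z)) (𝓝[>] 0) (𝓝 0) := by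
  have hbound : ∀ᶠ a : ℝ in 𝓝[>] 0,
      ‖(a : 𝕜) • Ring.inverse (T + (a : 𝕜) • 1) (T z)‖ ≤ 2 * a * ‖z‖ := by
    filter_upwards [self_mem_nhdsWithin] with a (ha : 0 < a)
    have hres : ‖(a : 𝕜) • Ring.inverse (T + (a : 𝕜) • 1) z‖ ≤ ‖z‖ :=
      le_of_opNorm_le _ (hT.norm_smul_inverse_add_smul_one_le ha) z |>.trans_eq (one_mul _)
    rw [hT.inverse_add_smul_one_apply_apply ha, norm_smul, RCLike.norm_ofReal, abs_of_pos ha]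
    calc a * ‖z - (a : 𝕜) • Ring.inverse (T + (a : 𝕜) • 1) z‖ ≤ a * (‖z‖ + ‖z‖) := by
          gcongr; exact (norm_sub_le _ _).trans (by gcongr)
      _ = 2 * a * ‖z‖ := by ring
  refine squeeze_zero_norm' hbound ?_
  have hcont : Continuous fun a : ℝ ↦ 2 * a * ‖z‖ := by fun_prop
  exact (hcont.tendsto' 0 0 (by simp)).mono_left nhdsWithin_le_nhds

theorem tendsto_smul_inverse_add_smul_one_apply [CompleteSpace E] (hT : T.IsPositive)
    {x : E} (hx : x ∈ (T : E →ₗ[𝕜] E).kerᗮ) :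
    Tendsto (fun a : ℝ ↦ (a : 𝕜) • Ring.inverse (T + (a : 𝕜) • 1) x) (𝓝[>] 0) (𝓝 0) := by
  rw [orthogonal_ker, hT.isSelfAdjoint.adjoint_eq, ← SetLike.mem_coe,
    Submodule.topologicalClosure_coe, LinearMap.coe_range, coe_coe] at hx
  refine tendsto_zero_of_mem_closure_of_eventually_norm_le (C := 1)
    (G := fun a : ℝ ↦ (a : 𝕜) • Ring.inverse (T + (a : 𝕜) • 1)) ?_ ?_ hx
  · filter_upwards [self_mem_nhdsWithin] with a (ha : 0 < a)
    exact hT.norm_smul_inverse_add_smul_one_le ha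
  · rintro _ ⟨z, rfl⟩
    exact hT.tendsto_smul_inverse_add_smul_one_apply_apply z

theorem tendsto_inverse_add_smul_one_apply_apply [CompleteSpace E] (hT : T.IsPositive)
    {x : E} (hx : x ∈ (T : E →ₗ[𝕜] E).kerᗮ) :
    Tendsto (fun a : ℝ ↦ Ring.inverse (T + (a : 𝕜) • 1) (T x)) (𝓝[>] 0) (𝓝 x) := by
  have hlim := tendsto_const_nhds (x := x).sub (hT.tendsto_smul_inverse_add_smul_one_apply hx)
  rw [sub_zero] at hlim
  refine hlim.congr' ?_
  filter_upwards [self_mem_nhdsWithin] with a (ha : 0 < a)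
  exact (hT.inverse_add_smul_one_apply_apply ha x).symm

end ContinuousLinearMap.IsPositive

/-- Minimal-norm solution via regularization (bounded-operator version, as the
context allows restricting to bounded A). T = A*A, u_a = (T + aI)⁻¹ A* f. -/
theorem stmt_17 {H : Type*} [NormedAddCommGroup H] [InnerProductSpace ℂ H] [CompleteSpace H]
    (A : H →L[ℂ] H) (f y₀ : H) (hf : A y₀ = f)
    (T : H →L[ℂ] H) (hT : T = (ContinuousLinearMap.adjoint A).comp A) :
    (∀ a : ℝ, 0 < a → IsUnit (T + (a : ℂ) • (1 : H →L[ℂ] H))) ∧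
    ∃ y : H,
      Tendsto (fun a : ℝ => Ring.inverse (T + (a : ℂ) • (1 : H →L[ℂ] H))
          ((ContinuousLinearMap.adjoint A) f))
        (nhdsWithin 0 (Set.Ioi 0)) (nhds y) ∧
      A y = f ∧
      ∀ x ∈ LinearMap.ker (A : H →ₗ[ℂ] H), (inner ℂ y x : ℂ) = 0 := by
  have hTpos : T.IsPositive := hT ▸ isPositive_adjoint_comp_self A
  set y := y₀ - (A : H →ₗ[ℂ] H).ker.starProjection y₀
  have hy : y ∈ (A : H →ₗ[ℂ] H).kerᗮ := Submodule.sub_starProjection_mem_orthogonal y₀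
  have hAy : A y = f := by
    rw [map_sub, hf, sub_eq_self]
    exact (A : H →ₗ[ℂ] H).ker.starProjection_apply_mem y₀
  refine ⟨fun a ha ↦ hTpos.isUnit_add_smul_one ha, y, ?_, hAy,
    fun x hx ↦ Submodule.inner_left_of_mem_orthogonal hx hy⟩
  have hAf : adjoint A f = T y := by rw [hT, comp_apply, hAy]
  rw [hAf]
  exact hTpos.tendsto_inverse_add_smul_one_apply_apply (by rwa [hT, ker_adjoint_comp_self])
end
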